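/- arXiv:2205.07689 — 3 statements merged into one kernel-verified Lean document; each statement's English description precedes it below -/
import Mathlib

section
/- Let 𝒳 ⊂ ℝ^d be compact with diameter D, let μ be a probability measure on 𝒳, and for x ∈ 𝒳 let F_x(t) = μ({z : ‖z − x‖² ≤ t}) with quantile function F_x^{-1}. Fix m ∈ (0,1] and define Ψ(x₁, x₂) = min(‖x₁ − x₂‖², F_{x₂}^{-1}(m)) − E_{Z}[min(‖Z − x₂‖², F_{x₂}^{-1}(m))] where Z ∼ μ. Then there exists a constant C < ∞, depending only on 𝒳, such that |Ψ(x₁, z₁) − Ψ(x₁, z₂)| ≤ C‖z₁ − z₂‖ for all x₁, z₁, z₂ ∈ 𝒳. -/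
/-!
The `m`-quantile `q(z)` of the squared distance `‖Z - z‖²` moves slowly with `z`: the ball of
radius `√t` around `a` lies in the ball of radius `√t + ‖a - b‖` around `b`, so
`√q(b) ≤ √q(a) + ‖a - b‖`. Since `√q ≤ D` on `𝒳` and `|s² - u²| ≤ 2D |s - u|` for `s, u ∈ [0, D]`,
both `z ↦ q(z)` and `z ↦ ‖x - z‖²` are `2D`-Lipschitz on `𝒳`, hence so is their minimum. The
centring integral inherits the same bound because `μ` is carried by `𝒳`, giving `C = 4D`.
-/

open MeasureTheory Metric

lemma abs_sq_sub_sq_le_of_le {a c D : ℝ} (ha : 0 ≤ a) (hc : 0 ≤ c) (haD : a ≤ D) (hcD : c ≤ D) :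
    |a ^ 2 - c ^ 2| ≤ 2 * D * |a - c| := by
  rw [show a ^ 2 - c ^ 2 = (a + c) * (a - c) by ring, abs_mul, abs_of_nonneg (add_nonneg ha hc)]
  gcongr
  linarith

section SqDist

variable {E : Type*} [NormedAddCommGroup E] [MeasurableSpace E] (μ : Measure E)

noncomputable section

def sqDistCDF (x : E) (t : ℝ) : ℝ := (μ {z | ‖z - x‖ ^ 2 ≤ t}).toReal

def sqDistQuantile (x : E) (m : ℝ) : ℝ := sInf {t | m ≤ sqDistCDF μ x t}

def truncSqDist (m : ℝ) (x z : E) : ℝ := min (‖x - z‖ ^ 2) (sqDistQuantile μ z m)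

end

variable {μ}

lemma nonneg_of_le_sqDistCDF {x : E} {m t : ℝ} (hm : 0 < m) (h : m ≤ sqDistCDF μ x t) : 0 ≤ t := by
  by_contra! ht
  have hempty : {z : E | ‖z - x‖ ^ 2 ≤ t} = ∅ :=
    Set.eq_empty_of_forall_notMem fun z hz => (ht.trans_le (sq_nonneg _)).not_ge hz
  simp only [sqDistCDF, hempty, measure_empty, ENNReal.toReal_zero] at h
  linarith

lemma sqDistCDF_le_sqDistCDF_sqrt_add_norm [IsFiniteMeasure μ] (a b : E) (t : ℝ) :
    sqDistCDF μ a t ≤ sqDistCDF μ b ((√t + ‖a - b‖) ^ 2) := by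
  refine ENNReal.toReal_mono (measure_ne_top μ _) (measure_mono fun z hz => ?_)
  have hza : ‖z - a‖ ≤ √t := by
    simpa only [Real.sqrt_sq (norm_nonneg _)] using Real.sqrt_le_sqrt (show ‖z - a‖ ^ 2 ≤ t from hz)
  have hzb : ‖z - b‖ ≤ √t + ‖a - b‖ :=
    (norm_sub_le_norm_sub_add_norm_sub z a b).trans (by linarith)
  exact pow_le_pow_left₀ (norm_nonneg _) hzb 2

lemma sqDistCDF_diam_sq [IsProbabilityMeasure μ] {𝒳 : Set E} (h𝒳 : Bornology.IsBounded 𝒳)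
    (hμ : μ 𝒳 = 1) {x : E} (hx : x ∈ 𝒳) : sqDistCDF μ x (diam 𝒳 ^ 2) = 1 := by
  have hsub : 𝒳 ⊆ {z | ‖z - x‖ ^ 2 ≤ diam 𝒳 ^ 2} := fun z hz =>
    pow_le_pow_left₀ (norm_nonneg _) (dist_eq_norm z x ▸ dist_le_diam_of_mem h𝒳 hz hx) 2
  simp [sqDistCDF, le_antisymm prob_le_one (hμ ▸ measure_mono hsub)]

lemma sqDistQuantile_nonneg {x : E} {m : ℝ} (hm : 0 < m) : 0 ≤ sqDistQuantile μ x m :=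
  Real.sInf_nonneg fun _ ht => nonneg_of_le_sqDistCDF hm ht

lemma bddBelow_le_sqDistCDF {x : E} {m : ℝ} (hm : 0 < m) :
    BddBelow {t | m ≤ sqDistCDF μ x t} :=
  ⟨0, fun _ ht => nonneg_of_le_sqDistCDF hm ht⟩

lemma sqrt_sqDistQuantile_le [IsFiniteMeasure μ] {m : ℝ} (hm : 0 < m) {a : E}
    (hne : {t | m ≤ sqDistCDF μ a t}.Nonempty) (b : E) :
    √(sqDistQuantile μ b m) ≤ √(sqDistQuantile μ a m) + ‖a - b‖ := by
  set f : ℝ → ℝ := fun t => (√t + ‖a - b‖) ^ 2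
  have hf_mono : Monotone f := fun s t hst =>
    pow_le_pow_left₀ (by positivity) (by gcongr) 2
  have hf_cont : Continuous f := by fun_prop
  have himage : f '' {t | m ≤ sqDistCDF μ a t} ⊆ {t | m ≤ sqDistCDF μ b t} := by
    rintro _ ⟨t, ht, rfl⟩
    exact ht.trans (sqDistCDF_le_sqDistCDF_sqrt_add_norm a b t)
  have hq : sqDistQuantile μ b m ≤ f (sqDistQuantile μ a m) := by
    unfold sqDistQuantile
    rw [hf_mono.map_csInf_of_continuousAt hf_cont.continuousAt hne
      (bddBelow_le_sqDistCDF hm)]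
    exact csInf_le_csInf (bddBelow_le_sqDistCDF hm) (hne.image f) himage
  simpa only [f, Real.sqrt_sq (by positivity : 0 ≤ √(sqDistQuantile μ a m) + ‖a - b‖)]
    using Real.sqrt_le_sqrt hq

variable [IsProbabilityMeasure μ] {𝒳 : Set E} {m : ℝ}

lemma sqrt_sqDistQuantile_le_diam (h𝒳 : Bornology.IsBounded 𝒳) (hμ : μ 𝒳 = 1) (hm0 : 0 < m)
    (hm1 : m ≤ 1) {x : E} (hx : x ∈ 𝒳) : √(sqDistQuantile μ x m) ≤ diam 𝒳 := by
  have hq : sqDistQuantile μ x m ≤ diam 𝒳 ^ 2 :=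
    csInf_le (bddBelow_le_sqDistCDF hm0) (by simpa [sqDistCDF_diam_sq h𝒳 hμ hx] using hm1)
  simpa only [Real.sqrt_sq diam_nonneg] using Real.sqrt_le_sqrt hq

lemma abs_sqDistQuantile_sub_le (h𝒳 : Bornology.IsBounded 𝒳) (hμ : μ 𝒳 = 1) (hm0 : 0 < m)
    (hm1 : m ≤ 1) {a b : E} (ha : a ∈ 𝒳) (hb : b ∈ 𝒳) :
    |sqDistQuantile μ a m - sqDistQuantile μ b m| ≤ 2 * diam 𝒳 * ‖a - b‖ := by
  have hne : ∀ x ∈ 𝒳, {t | m ≤ sqDistCDF μ x t}.Nonempty := fun x hx =>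
    ⟨diam 𝒳 ^ 2, by simpa [sqDistCDF_diam_sq h𝒳 hμ hx] using hm1⟩
  have hsqrt : |√(sqDistQuantile μ a m) - √(sqDistQuantile μ b m)| ≤ ‖a - b‖ := by
    rw [abs_sub_le_iff, sub_le_iff_le_add', sub_le_iff_le_add']
    constructor
    · simpa only [norm_sub_rev] using sqrt_sqDistQuantile_le hm0 (hne b hb) a
    · exact sqrt_sqDistQuantile_le hm0 (hne a ha) b
  rw [← Real.sq_sqrt (sqDistQuantile_nonneg (x := a) hm0),
    ← Real.sq_sqrt (sqDistQuantile_nonneg (x := b) hm0)]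
  refine (abs_sq_sub_sq_le_of_le (Real.sqrt_nonneg _) (Real.sqrt_nonneg _)
    (sqrt_sqDistQuantile_le_diam h𝒳 hμ hm0 hm1 ha)
    (sqrt_sqDistQuantile_le_diam h𝒳 hμ hm0 hm1 hb)).trans ?_
  gcongr

lemma abs_truncSqDist_sub_le (h𝒳 : Bornology.IsBounded 𝒳) (hμ : μ 𝒳 = 1) (hm0 : 0 < m)
    (hm1 : m ≤ 1) {x z₁ z₂ : E} (hx : x ∈ 𝒳) (hz₁ : z₁ ∈ 𝒳) (hz₂ : z₂ ∈ 𝒳) :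
    |truncSqDist μ m x z₁ - truncSqDist μ m x z₂| ≤ 2 * diam 𝒳 * ‖z₁ - z₂‖ := by
  have hdist : |‖x - z₁‖ - ‖x - z₂‖| ≤ ‖z₁ - z₂‖ := by
    simpa [norm_sub_rev z₂ z₁] using abs_norm_sub_norm_le (x - z₁) (x - z₂)
  have hsq : |‖x - z₁‖ ^ 2 - ‖x - z₂‖ ^ 2| ≤ 2 * diam 𝒳 * ‖z₁ - z₂‖ := by
    refine (abs_sq_sub_sq_le_of_le (norm_nonneg _) (norm_nonneg _) ?_ ?_).trans (by gcongr)
    · exact dist_eq_norm x z₁ ▸ dist_le_diam_of_mem h𝒳 hx hz₁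
    · exact dist_eq_norm x z₂ ▸ dist_le_diam_of_mem h𝒳 hx hz₂
  exact (abs_min_sub_min_le_max _ _ _ _).trans
    (max_le hsq (abs_sqDistQuantile_sub_le h𝒳 hμ hm0 hm1 hz₁ hz₂))

lemma integrable_truncSqDist [OpensMeasurableSpace E] (hm : 0 < m) (z : E) :
    Integrable (fun w => truncSqDist μ m w z) μ := by
  refine Integrable.of_bound (Continuous.aestronglyMeasurable (by unfold truncSqDist; fun_prop)) (sqDistQuantile μ z m)
    (Filter.Eventually.of_forall fun w => ?_)
  rw [truncSqDist, Real.norm_of_nonneg (le_min (sq_nonneg _) (sqDistQuantile_nonneg hm))]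
  exact min_le_right _ _

end SqDist

theorem stmt_10 {d : ℕ} (𝒳 : Set (EuclideanSpace ℝ (Fin d))) (h𝒳 : IsCompact 𝒳)
    (μ : Measure (EuclideanSpace ℝ (Fin d))) [IsProbabilityMeasure μ]
    (hsupp : μ 𝒳 = 1) (m : ℝ) (hm0 : 0 < m) (hm1 : m ≤ 1)
    (F : EuclideanSpace ℝ (Fin d) → ℝ → ℝ)
    (hF : ∀ x t, F x t = (μ {z | ‖z - x‖ ^ 2 ≤ t}).toReal)
    (Finv : EuclideanSpace ℝ (Fin d) → ℝ → ℝ)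
    (hFinv : ∀ x u, Finv x u = sInf {t : ℝ | u ≤ F x t})
    (Ψ : EuclideanSpace ℝ (Fin d) → EuclideanSpace ℝ (Fin d) → ℝ)
    (hΨ : ∀ x₁ x₂, Ψ x₁ x₂ =
      min (‖x₁ - x₂‖ ^ 2) (Finv x₂ m) - ∫ z, min (‖z - x₂‖ ^ 2) (Finv x₂ m) ∂μ) :
    ∃ C : ℝ, 0 ≤ C ∧
      ∀ x₁ ∈ 𝒳, ∀ z₁ ∈ 𝒳, ∀ z₂ ∈ 𝒳,
        |Ψ x₁ z₁ - Ψ x₁ z₂| ≤ C * ‖z₁ - z₂‖ := by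
  obtain rfl : F = sqDistCDF μ := funext fun x => funext (hF x)
  obtain rfl : Finv = fun x u => sqDistQuantile μ x u := funext fun x => funext (hFinv x)
  obtain rfl : Ψ = fun x z => truncSqDist μ m x z - ∫ w, truncSqDist μ m w z ∂μ :=
    funext fun x => funext (hΨ x)
  have hae : ∀ᵐ w ∂μ, w ∈ 𝒳 := (prob_compl_eq_zero_iff h𝒳.measurableSet).mpr hsupp
  have hbdd := h𝒳.isBounded
  refine ⟨4 * diam 𝒳, by positivity, fun x hx z₁ hz₁ z₂ hz₂ => ?_⟩
  have hpoint := abs_truncSqDist_sub_le hbdd hsupp hm0 hm1 hx hz₁ hz₂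
  have hint : |∫ w, truncSqDist μ m w z₁ ∂μ - ∫ w, truncSqDist μ m w z₂ ∂μ|
      ≤ 2 * diam 𝒳 * ‖z₁ - z₂‖ := by
    rw [← integral_sub (integrable_truncSqDist hm0 z₁) (integrable_truncSqDist hm0 z₂)]
    simpa using norm_integral_le_of_norm_le_const
      (f := fun w => truncSqDist μ m w z₁ - truncSqDist μ m w z₂) (hae.mono fun w hw =>
      abs_truncSqDist_sub_le hbdd hsupp hm0 hm1 hw hz₁ hz₂)
  rw [abs_le] at hpoint hint ⊢
  constructor <;> linarith [hpoint.1, hpoint.2, hint.1, hint.2]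
end

section
/- Let 𝒳 ⊂ ℝ^d be compact, P a probability measure on 𝒳, and for x ∈ 𝒳 let F_x be the distribution function of ‖x − Z‖² for Z ∼ P, with quantile function F_x^{-1}. Then for all x, x' ∈ 𝒳 and all t ∈ (0,1): |F_x^{-1}(t) − F_{x'}^{-1}(t)| ≤ 2·sup_{u∈(0,1)} sup_{w∈𝒳} F_w^{-1}(u)^{1/2} · ‖x − x'‖; in particular, with D = diam(𝒳)², the map x ↦ F_x^{-1}(t) is 2√D-Lipschitz uniformly in t. -/
open MeasureTheory

theorem stmt_14 {d : ℕ} (𝒳 : Set (EuclideanSpace ℝ (Fin d))) (h𝒳 : IsCompact 𝒳)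
    (P : Measure (EuclideanSpace ℝ (Fin d))) [IsProbabilityMeasure P]
    (hsupp : P 𝒳 = 1)
    (F : EuclideanSpace ℝ (Fin d) → ℝ → ℝ)
    (hF : ∀ x s, F x s = (P {z | ‖x - z‖ ^ 2 ≤ s}).toReal)
    (Finv : EuclideanSpace ℝ (Fin d) → ℝ → ℝ)
    (hFinv : ∀ x u, Finv x u = sInf {s : ℝ | u ≤ F x s}) :
    ∀ x ∈ 𝒳, ∀ x' ∈ 𝒳, ∀ t ∈ Set.Ioo (0:ℝ) 1,
      |Finv x t - Finv x' t| ≤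
        2 * (⨆ u ∈ Set.Ioo (0:ℝ) 1, ⨆ w ∈ 𝒳, Real.sqrt (Finv w u)) * ‖x - x'‖ ∧
      |Finv x t - Finv x' t| ≤ 2 * Real.sqrt (Metric.diam 𝒳 ^ 2) * ‖x - x'‖ := by
  set D : ℝ := Metric.diam 𝒳 with hD
  have hD0 : 0 ≤ D := Metric.diam_nonneg
  -- the big value D^2 is always in the quantile set, for w ∈ 𝒳 and u ≤ 1
  have hmemD : ∀ w ∈ 𝒳, ∀ u : ℝ, u ≤ 1 → D ^ 2 ∈ {s : ℝ | u ≤ F w s} := by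
    intro w hw u hu
    have hsub : 𝒳 ⊆ {z | ‖w - z‖ ^ 2 ≤ D ^ 2} := by
      intro z hz
      have h1 : ‖w - z‖ ≤ D := by
        rw [← dist_eq_norm]
        exact Metric.dist_le_diam_of_mem h𝒳.isBounded hw hz
      exact pow_le_pow_left₀ (norm_nonneg _) h1 2
    have h2 : P {z | ‖w - z‖ ^ 2 ≤ D ^ 2} = 1 :=
      le_antisymm prob_le_one (hsupp ▸ measure_mono hsub)
    simp only [Set.mem_setOf_eq, hF, h2, ENNReal.toReal_one]
    exact hu
  -- elements of the quantile set are nonnegative when u > 0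
  have hlb : ∀ w : EuclideanSpace ℝ (Fin d), ∀ u : ℝ, 0 < u →
      ∀ s ∈ {s : ℝ | u ≤ F w s}, (0:ℝ) ≤ s := by
    intro w u hu s hs
    by_contra hneg
    push_neg at hneg
    have hempty : {z : EuclideanSpace ℝ (Fin d) | ‖w - z‖ ^ 2 ≤ s} = ∅ := by
      ext z
      simp only [Set.mem_setOf_eq, Set.mem_empty_iff_false, iff_false, not_le]
      exact lt_of_lt_of_le hneg (by positivity)
    have : F w s = 0 := by rw [hF, hempty, measure_empty, ENNReal.toReal_zero]
    rw [Set.mem_setOf_eq, this] at hs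
    linarith
  have hbdd : ∀ w : EuclideanSpace ℝ (Fin d), ∀ u : ℝ, 0 < u →
      BddBelow {s : ℝ | u ≤ F w s} := fun w u hu => ⟨0, fun s hs => hlb w u hu s hs⟩
  have hFinv_nonneg : ∀ w ∈ 𝒳, ∀ u ∈ Set.Ioo (0:ℝ) 1, 0 ≤ Finv w u := by
    intro w hw u hu
    rw [hFinv]
    exact le_csInf ⟨D ^ 2, hmemD w hw u hu.2.le⟩ (hlb w u hu.1)
  have hFinv_le : ∀ w ∈ 𝒳, ∀ u ∈ Set.Ioo (0:ℝ) 1, Finv w u ≤ D ^ 2 := by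
    intro w hw u hu
    rw [hFinv]
    exact csInf_le (hbdd w u hu.1) (hmemD w hw u hu.2.le)
  -- key monotone comparison: F x' s ≥ u  implies  F x ((√s + ‖x-x'‖)^2) ≥ u
  have hcomp : ∀ y y' : EuclideanSpace ℝ (Fin d), ∀ u s : ℝ, 0 ≤ s → u ≤ F y' s →
      u ≤ F y ((Real.sqrt s + ‖y - y'‖) ^ 2) := by
    intro y y' u s hs0 hus
    have hsub : {z : EuclideanSpace ℝ (Fin d) | ‖y' - z‖ ^ 2 ≤ s} ⊆
        {z | ‖y - z‖ ^ 2 ≤ (Real.sqrt s + ‖y - y'‖) ^ 2} := by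
      intro z hz
      simp only [Set.mem_setOf_eq] at hz ⊢
      have h1 : ‖y' - z‖ ≤ Real.sqrt s := by
        have := Real.sqrt_le_sqrt hz
        rwa [Real.sqrt_sq (norm_nonneg _)] at this
      have h2 : ‖y - z‖ ≤ Real.sqrt s + ‖y - y'‖ := by
        calc ‖y - z‖ = ‖(y - y') + (y' - z)‖ := by rw [sub_add_sub_cancel]
          _ ≤ ‖y - y'‖ + ‖y' - z‖ := norm_add_le _ _
          _ ≤ ‖y - y'‖ + Real.sqrt s := by linarith
          _ = Real.sqrt s + ‖y - y'‖ := by ring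
      exact pow_le_pow_left₀ (norm_nonneg _) h2 2
    calc u ≤ F y' s := hus
      _ ≤ F y ((Real.sqrt s + ‖y - y'‖) ^ 2) := by
          rw [hF, hF]
          exact ENNReal.toReal_mono (measure_ne_top P _) (measure_mono hsub)
  intro x hx x' hx' t ht
  set δ : ℝ := ‖x - x'‖ with hδ
  have hδ0 : 0 ≤ δ := norm_nonneg _
  -- Lipschitz property of the square-root quantiles
  have hlip : ∀ y ∈ 𝒳, ∀ y' ∈ 𝒳,
      Real.sqrt (Finv y t) ≤ Real.sqrt (Finv y' t) + ‖y - y'‖ := by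
    intro y hy y' hy'
    set b : ℝ := Finv y' t with hb
    have hb0 : 0 ≤ b := hFinv_nonneg y' hy' t ht
    have key : ∀ ε : ℝ, 0 < ε →
        Finv y t ≤ (Real.sqrt (b + ε) + ‖y - y'‖) ^ 2 := by
      intro ε hε
      have hne : {s : ℝ | t ≤ F y' s}.Nonempty := ⟨D ^ 2, hmemD y' hy' t ht.2.le⟩
      obtain ⟨s, hs, hslt⟩ := Real.lt_sInf_add_pos hne hε
      have hs0 : 0 ≤ s := hlb y' t ht.1 s hs
      have hmem : (Real.sqrt s + ‖y - y'‖) ^ 2 ∈ {s : ℝ | t ≤ F y s} :=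
        hcomp y y' t s hs0 hs
      have h1 : Finv y t ≤ (Real.sqrt s + ‖y - y'‖) ^ 2 := by
        rw [hFinv]
        exact csInf_le (hbdd y t ht.1) hmem
      refine h1.trans (pow_le_pow_left₀ (by positivity) ?_ 2)
      have : Real.sqrt s ≤ Real.sqrt (b + ε) := by
        apply Real.sqrt_le_sqrt
        rw [hb, hFinv]
        exact hslt.le
      linarith
    have hlim : Finv y t ≤ (Real.sqrt b + ‖y - y'‖) ^ 2 := by
      have hc : ContinuousAt (fun ε : ℝ => (Real.sqrt (b + ε) + ‖y - y'‖) ^ 2) 0 := by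
        fun_prop
      have htend : Filter.Tendsto (fun ε : ℝ => (Real.sqrt (b + ε) + ‖y - y'‖) ^ 2)
          (nhdsWithin 0 (Set.Ioi 0)) (nhds ((Real.sqrt b + ‖y - y'‖) ^ 2)) := by
        have := hc.tendsto.mono_left (nhdsWithin_le_nhds (s := Set.Ioi (0:ℝ)))
        simpa using this
      exact ge_of_tendsto htend
        (Filter.eventually_iff_exists_mem.mpr ⟨Set.Ioi 0, self_mem_nhdsWithin,
          fun ε hε => key ε hε⟩)
    calc Real.sqrt (Finv y t) ≤ Real.sqrt ((Real.sqrt b + ‖y - y'‖) ^ 2) :=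
          Real.sqrt_le_sqrt hlim
      _ = Real.sqrt b + ‖y - y'‖ := Real.sqrt_sq (by positivity)
  set a : ℝ := Finv x t with ha
  set b : ℝ := Finv x' t with hbb
  have ha0 : 0 ≤ a := hFinv_nonneg x hx t ht
  have hb0 : 0 ≤ b := hFinv_nonneg x' hx' t ht
  have habs : |Real.sqrt a - Real.sqrt b| ≤ δ := by
    rw [abs_sub_le_iff]
    constructor
    · have := hlip x hx x' hx'
      linarith
    · have := hlip x' hx' x hx
      rw [norm_sub_rev] at this
      linarith
  have hkey : |a - b| ≤ (Real.sqrt a + Real.sqrt b) * δ := by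
    have hab : a - b = (Real.sqrt a - Real.sqrt b) * (Real.sqrt a + Real.sqrt b) := by
      have h1 : Real.sqrt a ^ 2 = a := Real.sq_sqrt ha0
      have h2 : Real.sqrt b ^ 2 = b := Real.sq_sqrt hb0
      nlinarith
    rw [hab, abs_mul, abs_of_nonneg (by positivity : (0:ℝ) ≤ Real.sqrt a + Real.sqrt b)]
    rw [mul_comm]
    exact mul_le_mul_of_nonneg_left habs (by positivity)
  -- bounds on the square roots
  have hsqrt_le_D : ∀ w ∈ 𝒳, ∀ u ∈ Set.Ioo (0:ℝ) 1,
      Real.sqrt (Finv w u) ≤ Real.sqrt (D ^ 2) :=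
    fun w hw u hu => Real.sqrt_le_sqrt (hFinv_le w hw u hu)
  have hC0 : 0 ≤ Real.sqrt (D ^ 2) := Real.sqrt_nonneg _
  -- the supremum bound
  set M : ℝ := ⨆ u ∈ Set.Ioo (0:ℝ) 1, ⨆ w ∈ 𝒳, Real.sqrt (Finv w u) with hM
  have hinner_le : ∀ u : ℝ, ∀ w : EuclideanSpace ℝ (Fin d), u ∈ Set.Ioo (0:ℝ) 1 →
      (⨆ _ : w ∈ 𝒳, Real.sqrt (Finv w u)) ≤ Real.sqrt (D ^ 2) := by
    intro u w hu
    by_cases hw : w ∈ 𝒳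
    · rw [ciSup_pos hw]
      exact hsqrt_le_D w hw u hu
    · haveI : IsEmpty (w ∈ 𝒳) := ⟨hw⟩
      rw [Real.iSup_of_isEmpty]
      exact hC0
  have hmid_le : ∀ u : ℝ,
      (⨆ _ : u ∈ Set.Ioo (0:ℝ) 1, ⨆ w ∈ 𝒳, Real.sqrt (Finv w u)) ≤ Real.sqrt (D ^ 2) := by
    intro u
    by_cases hu : u ∈ Set.Ioo (0:ℝ) 1
    · rw [ciSup_pos hu]
      exact Real.iSup_le (fun w => hinner_le u w hu) hC0
    · haveI : IsEmpty (u ∈ Set.Ioo (0:ℝ) 1) := ⟨hu⟩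
      rw [Real.iSup_of_isEmpty]
      exact hC0
  have hle_M : ∀ w ∈ 𝒳, Real.sqrt (Finv w t) ≤ M := by
    intro w hw
    have h1 : Real.sqrt (Finv w t) ≤ ⨆ w ∈ 𝒳, Real.sqrt (Finv w t) := by
      have hbd : BddAbove (Set.range fun w => ⨆ _ : w ∈ 𝒳, Real.sqrt (Finv w t)) := by
        refine ⟨Real.sqrt (D ^ 2), ?_⟩
        rintro y ⟨w', rfl⟩
        exact hinner_le t w' ht
      have := le_ciSup hbd w
      rwa [ciSup_pos hw] at this
    have h2 : (⨆ w ∈ 𝒳, Real.sqrt (Finv w t)) ≤ M := by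
      have hbd : BddAbove (Set.range fun u =>
          ⨆ _ : u ∈ Set.Ioo (0:ℝ) 1, ⨆ w ∈ 𝒳, Real.sqrt (Finv w u)) := by
        refine ⟨Real.sqrt (D ^ 2), ?_⟩
        rintro y ⟨u, rfl⟩
        exact hmid_le u
      have := le_ciSup hbd t
      rwa [ciSup_pos ht] at this
    exact h1.trans h2
  constructor
  · have h1 : Real.sqrt a ≤ M := hle_M x hx
    have h2 : Real.sqrt b ≤ M := hle_M x' hx'
    calc |a - b| ≤ (Real.sqrt a + Real.sqrt b) * δ := hkey
      _ ≤ 2 * M * δ := mul_le_mul_of_nonneg_right (by linarith) hδ0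
  · have h1 : Real.sqrt a ≤ Real.sqrt (D ^ 2) := hsqrt_le_D x hx t ht
    have h2 : Real.sqrt b ≤ Real.sqrt (D ^ 2) := hsqrt_le_D x' hx' t ht
    calc |a - b| ≤ (Real.sqrt a + Real.sqrt b) * δ := hkey
      _ ≤ 2 * Real.sqrt (D ^ 2) * δ := mul_le_mul_of_nonneg_right (by linarith) hδ0
end

section
/- Let ξ₁, …, ξ_n be i.i.d. Uniform(0,1) with empirical distribution function H_n and let m ∈ (0,1) with k = mn an integer. Suppose (F_x^{-1})_{x∈𝒳} is a family of quantile functions with uniform modulus of continuity ω(u) ≤ κ·u^{1/b} for constants κ > 0, b ≥ 1. Then S_n := sup_{x∈𝒳} |F_x^{-1}(H_n^{-1}(m)) − F_x^{-1}(m)| satisfies P(S_n > ε) ≤ 2·exp(−(3n/5)·(ε/κ)^{2b}) for all sufficiently small ε > 0; in particular S_n = o_P((log n / n)^{1/(2b)}). -/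
/-!
On the event that all sample points lie in `(0, 1)` (which has full probability), the empirical
quantile is a sample point, so the modulus of continuity gives
`S_n ≤ κ |H_n⁻¹(m) - m| ^ (1/b)` and `S_n > ε` forces `|H_n⁻¹(m) - m| > t := (ε/κ)^b`.
Since `k = mn` is an integer, `H_n⁻¹(m) > m + t` means that fewer than `n(m + t) - nt` sample points
lie below `m + t`, and `H_n⁻¹(m) < m - t` that at least `n(m - t) + nt` lie below `m - t`.
Both are deviations of size `nt` of a sum of `n` independent Bernoulli variables from its mean,
so Hoeffding's inequality bounds each by `exp(-2nt²) ≤ exp(-(3/5) n (ε/κ)^(2b))`.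
Taking `ε = δ (log n / n)^(1/(2b))` turns the bound into `2 n^(-c)` for some `c > 0`.
-/

open MeasureTheory ProbabilityTheory Real Finset Filter Topology

lemma pos_and_le_of_cast_eq_mul {m : ℝ} {n k : ℕ} (hm0 : 0 < m) (hm1 : m < 1) (hn : 0 < n)
    (hk : (k : ℝ) = m * n) : 0 < k ∧ k ≤ n := by
  have hn' : (0 : ℝ) < n := by exact_mod_cast hn
  exact ⟨by exact_mod_cast (hk ▸ mul_pos hm0 hn' : (0 : ℝ) < k),
    by exact_mod_cast (hk ▸ by nlinarith : (k : ℝ) ≤ n)⟩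

noncomputable def empiricalCount (x : ℕ → ℝ) (n : ℕ) (t : ℝ) : ℕ := #{i ∈ range n | x i ≤ t}

namespace empiricalCount

variable {x : ℕ → ℝ} {n k : ℕ}

lemma cast_eq_sum (x : ℕ → ℝ) (n : ℕ) (t : ℝ) :
    (empiricalCount x n t : ℝ) = ∑ i ∈ range n, if x i ≤ t then (1 : ℝ) else 0 := by
  simp [empiricalCount]

lemma exists_setOf_le_eq_Ici (hk : 0 < k) (hkn : k ≤ n) :
    ∃ j < n, {t | k ≤ empiricalCount x n t} = Set.Ici (x j) := by
  obtain ⟨jmax, hjmax_mem, hjmax⟩ :=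
    (range n).exists_max_image x (nonempty_range_iff.2 (by omega))
  have hcount_max : empiricalCount x n (x jmax) = n := by
    rw [empiricalCount, filter_true_of_mem hjmax, card_range]
  obtain ⟨j, hjT, hj⟩ := ((range n).filter fun j ↦ k ≤ empiricalCount x n (x j)).exists_min_image
    x ⟨jmax, mem_filter.2 ⟨hjmax_mem, hcount_max.symm ▸ hkn⟩⟩
  refine ⟨j, mem_range.1 (mem_filter.1 hjT).1, Set.ext fun t ↦ ⟨fun ht ↦ ?_, fun ht ↦ ?_⟩⟩
  · -- the largest sample point below `t` has the same count as `t`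
    obtain ⟨i, hiJ, hi⟩ := ((range n).filter (x · ≤ t)).exists_max_image x
      (card_pos.1 (hk.trans_le ht))
    have hcount : empiricalCount x n t ≤ empiricalCount x n (x i) :=
      card_le_card (monotone_filter_right _ fun l hl hlt ↦ hi l (mem_filter.2 ⟨hl, hlt⟩))
    exact (hj i (mem_filter.2 ⟨(mem_filter.1 hiJ).1, ht.trans hcount⟩)).trans
      (mem_filter.1 hiJ).2
  · exact (mem_filter.1 hjT).2.trans
      (card_le_card (monotone_filter_right _ fun _ _ hi ↦ hi.trans ht))

lemma setOf_le_one_div_mul_sum_eq {m : ℝ} (hn : 0 < n) (hk : (k : ℝ) = m * n) :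
    {t | m ≤ 1 / n * ∑ i ∈ range n, if x i ≤ t then (1 : ℝ) else 0}
      = {t | k ≤ empiricalCount x n t} := by
  simp_rw [← cast_eq_sum, one_div_mul_eq_div, le_div_iff₀ (Nat.cast_pos.2 hn : (0 : ℝ) < n), ← hk,
    Nat.cast_le]

lemma iSup_abs_sub_le_of_modulus {𝒳 : Type*} [Nonempty 𝒳] {Finv : 𝒳 → ℝ → ℝ} {κ b m : ℝ}
    (hmod : ∀ y : 𝒳, ∀ t ∈ Set.Ioo (0 : ℝ) 1, ∀ t' ∈ Set.Ioo (0 : ℝ) 1,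
      |Finv y t - Finv y t'| ≤ κ * |t - t'| ^ (1 / b))
    (hm : m ∈ Set.Ioo (0 : ℝ) 1) (hx : ∀ i, x i ∈ Set.Ioo (0 : ℝ) 1) (hk : 0 < k) (hkn : k ≤ n) :
    ⨆ y, |Finv y (sInf {s | k ≤ empiricalCount x n s}) - Finv y m|
      ≤ κ * |sInf {s | k ≤ empiricalCount x n s} - m| ^ (1 / b) := by
  obtain ⟨j, -, hset⟩ := exists_setOf_le_eq_Ici (x := x) hk hkn
  rw [hset, csInf_Ici]
  exact ciSup_le fun y ↦ hmod y _ (hx j) m hm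

lemma lt_or_le_of_lt_abs_sInf_sub {a t : ℝ} (hk : 0 < k) (hkn : k ≤ n)
    (h : t < |sInf {s | k ≤ empiricalCount x n s} - a|) :
    empiricalCount x n (a + t) < k ∨ k ≤ empiricalCount x n (a - t) := by
  obtain ⟨j, -, hset⟩ := exists_setOf_le_eq_Ici (x := x) hk hkn
  have hmem : ∀ s, k ≤ empiricalCount x n s ↔ x j ≤ s := fun s ↦ Set.ext_iff.1 hset s
  rw [hset, csInf_Ici, lt_abs] at h
  rcases h with h | h
  · exact .inl (not_le.1 fun hle ↦ by linarith [(hmem _).1 hle])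
  · exact .inr ((hmem _).2 (by linarith))

end empiricalCount

section Hoeffding

variable {Ω : Type*} [MeasurableSpace Ω] {μ : Measure Ω} [IsProbabilityMeasure μ]
  {X : ℕ → Ω → ℝ} {p t : ℝ}

lemma measureReal_sum_ge_le_of_mem_Icc_zero_one (hind : iIndepFun X μ)
    (hX : ∀ i, AEMeasurable (X i) μ) (h01 : ∀ i, ∀ᵐ ω ∂μ, X i ω ∈ Set.Icc 0 1)
    (hp : ∀ i, μ[X i] = p) (n : ℕ) (ht : 0 ≤ t) :
    μ.real {ω | n * p + n * t ≤ ∑ i ∈ range n, X i ω} ≤ exp (-2 * n * t ^ 2) := by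
  have hsub : ∀ i < n, HasSubgaussianMGF (fun ω ↦ X i ω - p) ((‖(1 : ℝ) - 0‖₊ / 2) ^ 2) μ :=
    fun i _ ↦ hp i ▸ hasSubgaussianMGF_of_mem_Icc (hX i) (h01 i)
  have h := HasSubgaussianMGF.measure_sum_range_ge_le_of_iIndepFun
    (hind.comp (fun _ x ↦ x - p) fun _ ↦ by fun_prop) hsub (ε := n * t) (by positivity)
  have hset : {ω | n * p + n * t ≤ ∑ i ∈ range n, X i ω}
      = {ω | n * t ≤ ∑ i ∈ range n, (X i ω - p)} := by
    ext ω
    simp only [Set.mem_ofPred_eq, sum_sub_distrib, sum_const, card_range, nsmul_eq_mul]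
    constructor <;> intro h <;> linarith
  have hc : ((‖(1 : ℝ) - 0‖₊ / 2) ^ 2 : NNReal) = 4⁻¹ := by norm_num
  rw [hset]
  refine h.trans_eq ?_
  rw [hc]
  rcases Nat.eq_zero_or_pos n with rfl | hn
  · simp
  · congr 1
    push_cast
    field_simp
    ring

lemma measureReal_sum_le_le_of_mem_Icc_zero_one (hind : iIndepFun X μ)
    (hX : ∀ i, AEMeasurable (X i) μ) (h01 : ∀ i, ∀ᵐ ω ∂μ, X i ω ∈ Set.Icc 0 1)
    (hp : ∀ i, μ[X i] = p) (n : ℕ) (ht : 0 ≤ t) :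
    μ.real {ω | ∑ i ∈ range n, X i ω ≤ n * p - n * t} ≤ exp (-2 * n * t ^ 2) := by
  have h := measureReal_sum_ge_le_of_mem_Icc_zero_one (X := fun i ω ↦ 1 - X i ω) (p := 1 - p)
    (hind.comp (fun _ x ↦ 1 - x) fun _ ↦ by fun_prop) (fun i ↦ (hX i).const_sub 1)
    (fun i ↦ by filter_upwards [h01 i] with ω hω using ⟨by linarith [hω.2], by linarith [hω.1]⟩)
    (fun i ↦ by
      rw [integral_sub (integrable_const 1) (.of_mem_Icc 0 1 (hX i) (h01 i)), hp i]
      simp)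
    n ht
  convert h using 3
  ext ω
  simp only [sum_sub_distrib, sum_const, card_range, nsmul_eq_mul, mul_one]
  constructor <;> intro h <;> linarith

lemma measureReal_empiricalCount_tails_le {ξ : ℕ → Ω → ℝ} {u : ℝ} (hind : iIndepFun ξ μ)
    (hmeas : ∀ i, Measurable (ξ i)) (hp : ∀ i, μ.real {ω | ξ i ω ≤ u} = p) (n : ℕ) (ht : 0 ≤ t) :
    μ.real {ω | n * p + n * t ≤ empiricalCount (ξ · ω) n u} ≤ exp (-2 * n * t ^ 2) ∧
      μ.real {ω | empiricalCount (ξ · ω) n u ≤ n * p - n * t} ≤ exp (-2 * n * t ^ 2) := by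
  set Y : ℕ → Ω → ℝ := fun i ↦ {ω | ξ i ω ≤ u}.indicator 1
  have hsum : ∀ ω, (empiricalCount (ξ · ω) n u : ℝ) = ∑ i ∈ range n, Y i ω := fun ω ↦ by
    simp [Y, empiricalCount.cast_eq_sum, Set.indicator_apply]
  have hmeasY : ∀ i, MeasurableSet {ω | ξ i ω ≤ u} := fun i ↦
    measurableSet_le (hmeas i) measurable_const
  have hind : iIndepFun Y μ :=
    hind.comp (fun _ ↦ (Set.Iic u).indicator 1) fun _ ↦ measurable_one.indicator measurableSet_Iic
  have hY : ∀ i, AEMeasurable (Y i) μ := fun i ↦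
    (measurable_one.indicator (hmeasY i)).aemeasurable
  have h01 : ∀ i, ∀ᵐ ω ∂μ, Y i ω ∈ Set.Icc 0 1 := fun i ↦ ae_of_all _ fun ω ↦
    ⟨Set.indicator_nonneg (fun _ _ ↦ zero_le_one) ω,
      Set.indicator_apply_le' (fun _ ↦ le_rfl) fun _ ↦ zero_le_one⟩
  have hmean : ∀ i, μ[Y i] = p := fun i ↦ (integral_indicator_one (hmeasY i)).trans (hp i)
  simp_rw [hsum]
  exact ⟨measureReal_sum_ge_le_of_mem_Icc_zero_one hind hY h01 hmean n ht,
    measureReal_sum_le_le_of_mem_Icc_zero_one hind hY h01 hmean n ht⟩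

end Hoeffding

section Uniform

variable {Ω : Type*} [MeasurableSpace Ω] {μ : Measure Ω}

lemma measureReal_le_of_map_eq_uniform {X : Ω → ℝ} (hX : Measurable X)
    (hmap : μ.map X = volume.restrict (Set.Ioo 0 1)) {u : ℝ} (hu : u ∈ Set.Ioo (0 : ℝ) 1) :
    μ.real {ω | X ω ≤ u} = u := by
  have hinter : Set.Iic u ∩ Set.Ioo 0 1 = Set.Ioc 0 u := Set.ext fun x ↦ by
    simp only [Set.mem_inter_iff, Set.mem_Iic, Set.mem_Ioo, Set.mem_Ioc]
    exact ⟨fun ⟨hxu, hx0, _⟩ ↦ ⟨hx0, hxu⟩, fun ⟨hx0, hxu⟩ ↦ ⟨hxu, hx0, hxu.trans_lt hu.2⟩⟩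
  change (μ (X ⁻¹' Set.Iic u)).toReal = u
  rw [← Measure.map_apply hX measurableSet_Iic, hmap, Measure.restrict_apply measurableSet_Iic,
    hinter, volume_Ioc, sub_zero, ENNReal.toReal_ofReal hu.1.le]

lemma ae_mem_Ioo_of_map_eq_uniform {X : Ω → ℝ} (hX : Measurable X)
    (hmap : μ.map X = volume.restrict (Set.Ioo 0 1)) : ∀ᵐ ω ∂μ, X ω ∈ Set.Ioo (0 : ℝ) 1 :=
  ae_of_ae_map hX.aemeasurable (hmap ▸ ae_restrict_mem measurableSet_Ioo)

lemma measure_lt_abs_sInf_empiricalCount_sub_le [IsProbabilityMeasure μ] {ξ : ℕ → Ω → ℝ}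
    (hmeas : ∀ i, Measurable (ξ i))
    (hid : ∀ i, μ.map (ξ i) = volume.restrict (Set.Ioo 0 1)) (hind : iIndepFun ξ μ)
    {m t : ℝ} (ht : 0 ≤ t) (htm : t < min m (1 - m)) {n k : ℕ} (hn : 0 < n)
    (hk : (k : ℝ) = m * n) :
    μ {ω | t < |sInf {s | k ≤ empiricalCount (ξ · ω) n s} - m|}
      ≤ ENNReal.ofReal (2 * exp (-2 * n * t ^ 2)) := by
  have htm' := htm.trans_le (min_le_right _ _)
  replace htm := htm.trans_le (min_le_left _ _)
  obtain ⟨hk0, hkn⟩ := pos_and_le_of_cast_eq_mul (by linarith) (by linarith) hn hk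
  have hcdf : ∀ u ∈ Set.Ioo (0 : ℝ) 1, ∀ i, μ.real {ω | ξ i ω ≤ u} = u := fun u hu i ↦
    measureReal_le_of_map_eq_uniform (hmeas i) (hid i) hu
  have hup := (measureReal_empiricalCount_tails_le hind hmeas
    (hcdf (m + t) ⟨by linarith, by linarith⟩) n ht).2
  have hlow := (measureReal_empiricalCount_tails_le hind hmeas
    (hcdf (m - t) ⟨by linarith, by linarith⟩) n ht).1
  calc μ {ω | t < |sInf {s | k ≤ empiricalCount (ξ · ω) n s} - m|}
      ≤ μ ({ω | empiricalCount (ξ · ω) n (m + t) ≤ n * (m + t) - n * t}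
          ∪ {ω | n * (m - t) + n * t ≤ empiricalCount (ξ · ω) n (m - t)}) := by
        refine measure_mono fun ω hω ↦ ?_
        rcases empiricalCount.lt_or_le_of_lt_abs_sInf_sub hk0 hkn hω with h | h
        · have : (empiricalCount (ξ · ω) n (m + t) : ℝ) < k := by exact_mod_cast h
          exact .inl (by rw [Set.mem_ofPred_eq]; linarith)
        · have : (k : ℝ) ≤ empiricalCount (ξ · ω) n (m - t) := by exact_mod_cast h
          exact .inr (by rw [Set.mem_ofPred_eq]; linarith)
    _ ≤ ENNReal.ofReal (exp (-2 * n * t ^ 2)) + ENNReal.ofReal (exp (-2 * n * t ^ 2)) := by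
        refine (measure_union_le _ _).trans (add_le_add ?_ ?_) <;>
          rw [← ofReal_measureReal] <;> exact ENNReal.ofReal_le_ofReal ‹_›
    _ = ENNReal.ofReal (2 * exp (-2 * n * t ^ 2)) := by
        rw [← ENNReal.ofReal_add (by positivity) (by positivity), two_mul]

end Uniform

lemma lt_mul_rpow_one_div_iff {ε κ b s : ℝ} (hε : 0 ≤ ε) (hκ : 0 < κ) (hb : 0 < b)
    (hs : 0 ≤ s) : ε < κ * s ^ (1 / b) ↔ (ε / κ) ^ b < s := by
  rw [← div_lt_iff₀' hκ, one_div, lt_rpow_inv_iff_of_pos (div_nonneg hε hκ.le) hs hb]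

lemma tendsto_mul_log_div_rpow_atTop {δ c : ℝ} (hc : 0 < c) :
    Tendsto (fun n : ℕ ↦ δ * (log n / n) ^ c) atTop (𝓝 0) := by
  have hlog : Tendsto (fun n : ℕ ↦ log n / n) atTop (𝓝 0) := by
    refine .comp (f := ((↑) : ℕ → ℝ)) (g := fun x ↦ log x / x) ?_ tendsto_natCast_atTop_atTop
    simpa using (isLittleO_log_rpow_atTop one_pos).tendsto_div_nhds_zero
  simpa [zero_rpow hc.ne'] using
    ((continuousAt_rpow_const 0 c (Or.inr hc.le)).tendsto.comp hlog).const_mul δ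

lemma exists_forall_ge_measure_lt_le_of_exp_tail {Ω : Type*} [MeasurableSpace Ω] {μ : Measure Ω}
    {S : ℕ → Ω → ℝ} {P : ℕ → Prop} {ε₀ κ b : ℝ} (hε₀ : 0 < ε₀) (hκ : 0 < κ) (hb : 0 < b)
    (htail : ∀ ε, 0 < ε → ε < ε₀ → ∀ n : ℕ, 0 < n → P n →
      μ {ω | ε < S n ω} ≤ ENNReal.ofReal (2 * exp (-(3 * n / 5) * (ε / κ) ^ (2 * b))))
    {δ ε' : ℝ} (hδ : 0 < δ) (hε' : 0 < ε') :
    ∃ N : ℕ, ∀ n ≥ N, P n →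
      μ {ω | δ * (log n / n) ^ (1 / (2 * b)) < S n ω} ≤ ENNReal.ofReal ε' := by
  set c := 3 / 5 * (δ / κ) ^ (2 * b)
  have hc : 0 < c := by positivity
  have hexp : ∀ n : ℕ, (3 * n / 5) * (δ * (log n / n) ^ (1 / (2 * b)) / κ) ^ (2 * b)
      = c * log n := by
    intro n
    have hln : 0 ≤ log n / n := div_nonneg (log_natCast_nonneg n) n.cast_nonneg
    rw [mul_div_right_comm δ, mul_rpow (by positivity) (by positivity), ← rpow_mul hln,
      one_div_mul_cancel (by positivity), rpow_one]
    rcases Nat.eq_zero_or_pos n with rfl | hn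
    · simp
    · field_simp
      ring
  have hbound : Tendsto (fun n : ℕ ↦ 2 * exp (-(c * log n))) atTop (𝓝 0) := by
    simpa using ((tendsto_exp_atBot.comp (tendsto_neg_atTop_atBot.comp
      ((tendsto_log_atTop.comp tendsto_natCast_atTop_atTop).const_mul_atTop hc)))).const_mul 2
  obtain ⟨N, hN⟩ := eventually_atTop.1 (((tendsto_mul_log_div_rpow_atTop (δ := δ)
    (by positivity : 0 < 1 / (2 * b))).eventually_lt_const hε₀).and
    ((hbound.eventually_lt_const hε').and (eventually_ge_atTop 2)))
  refine ⟨N, fun n hn hPn ↦ ?_⟩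
  obtain ⟨hrate, hsmall, hn2⟩ := hN n hn
  have hlog : 0 < log n := log_pos (by exact_mod_cast hn2)
  refine (htail _ (by positivity) hrate n (by omega) hPn).trans (ENNReal.ofReal_le_ofReal ?_)
  rw [neg_mul, hexp]
  exact hsmall.le

theorem stmt_19 {Ω : Type*} [MeasurableSpace Ω] (μ : Measure Ω)
    [IsProbabilityMeasure μ]
    -- i.i.d. Uniform(0,1) random variables
    (ξ : ℕ → Ω → ℝ) (hmeas : ∀ i, Measurable (ξ i))
    (hid : ∀ i, Measure.map (ξ i) μ = volume.restrict (Set.Ioo (0:ℝ) 1))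
    (hindep : iIndepFun ξ μ)
    (m : ℝ) (hm0 : 0 < m) (hm1 : m < 1)
    -- a family of quantile functions with uniform modulus of continuity ≤ κ u^{1/b}
    (𝒳 : Type*) [Nonempty 𝒳] (Finv : 𝒳 → ℝ → ℝ)
    (κ : ℝ) (hκ : 0 < κ) (b : ℝ) (hb : 1 ≤ b)
    (hmod : ∀ x : 𝒳, ∀ t ∈ Set.Ioo (0:ℝ) 1, ∀ t' ∈ Set.Ioo (0:ℝ) 1,
      |Finv x t - Finv x t'| ≤ κ * |t - t'| ^ (1 / b))
    -- empirical distribution function and empirical quantile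
    (H : ℕ → Ω → ℝ → ℝ)
    (hH : ∀ n ω t, H n ω t =
      (1 / (n:ℝ)) * ∑ i ∈ Finset.range n, (if ξ i ω ≤ t then (1:ℝ) else 0))
    (Hinv : ℕ → Ω → ℝ) (hHinv : ∀ n ω, Hinv n ω = sInf {t : ℝ | m ≤ H n ω t})
    (S : ℕ → Ω → ℝ)
    (hS : ∀ n ω, S n ω = ⨆ x : 𝒳, |Finv x (Hinv n ω) - Finv x m|) :
    -- exponential deviation bound for all sufficiently small ε > 0
    (∃ ε₀ : ℝ, 0 < ε₀ ∧ ∀ ε : ℝ, 0 < ε → ε < ε₀ → ∀ n : ℕ, 0 < n →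
      (∃ k : ℕ, (k:ℝ) = m * n) →
      μ {ω | ε < S n ω} ≤
        ENNReal.ofReal (2 * Real.exp (-(3 * n / 5) * (ε / κ) ^ (2 * b)))) ∧
    -- in particular, S_n = o_P((log n / n)^{1/(2b)})
    (∀ δ : ℝ, 0 < δ → ∀ ε' : ℝ, 0 < ε' → ∃ N : ℕ, ∀ n ≥ N,
      (∃ k : ℕ, (k:ℝ) = m * n) →
      μ {ω | δ * (Real.log n / n) ^ (1 / (2 * b)) < S n ω} ≤ ENNReal.ofReal ε') := by
  have hb0 : 0 < b := by linarith
  have hε₀ : 0 < κ * min m (1 - m) ^ (1 / b) := by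
    have : 0 < min m (1 - m) := lt_min hm0 (by linarith)
    positivity
  have hgood : ∀ᵐ ω ∂μ, ∀ i, ξ i ω ∈ Set.Ioo (0 : ℝ) 1 :=
    ae_all_iff.2 fun i ↦ ae_mem_Ioo_of_map_eq_uniform (hmeas i) (hid i)
  have htail : ∀ ε, 0 < ε → ε < κ * min m (1 - m) ^ (1 / b) → ∀ n : ℕ, 0 < n →
      (∃ k : ℕ, (k : ℝ) = m * n) →
      μ {ω | ε < S n ω} ≤ ENNReal.ofReal (2 * exp (-(3 * n / 5) * (ε / κ) ^ (2 * b))) := by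
    intro ε hε hεε₀ n hn ⟨k, hk⟩
    have ht := (lt_mul_rpow_one_div_iff hε.le hκ hb0 (le_min hm0.le (by linarith))).1 hεε₀
    obtain ⟨hk0, hkn⟩ := pos_and_le_of_cast_eq_mul hm0 hm1 hn hk
    have hHinv_eq : ∀ ω, Hinv n ω = sInf {s | k ≤ empiricalCount (ξ · ω) n s} := fun ω ↦ by
      simp_rw [hHinv, hH, empiricalCount.setOf_le_one_div_mul_sum_eq hn hk]
    have hsub : {ω | ε < S n ω}
        ≤ᵐ[μ] {ω | (ε / κ) ^ b < |sInf {s | k ≤ empiricalCount (ξ · ω) n s} - m|} := by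
      filter_upwards [hgood] with ω hω (hεS : ε < S n ω)
      rw [hS, hHinv_eq] at hεS
      exact (lt_mul_rpow_one_div_iff hε.le hκ hb0 (abs_nonneg _)).1 (hεS.trans_le
        (empiricalCount.iSup_abs_sub_le_of_modulus hmod ⟨hm0, hm1⟩ hω hk0 hkn))
    refine (measure_mono_ae hsub).trans ((measure_lt_abs_sInf_empiricalCount_sub_le hmeas hid
      hindep (by positivity) ht hn hk).trans (ENNReal.ofReal_le_ofReal ?_))
    have hsq : ((ε / κ) ^ b) ^ 2 = (ε / κ) ^ (2 * b) := by
      rw [← rpow_natCast, ← rpow_mul (by positivity), mul_comm, Nat.cast_ofNat]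
    rw [hsq]
    gcongr 2 * exp (?_ * _)
    linarith
  exact ⟨⟨_, hε₀, htail⟩, fun δ hδ ε' hε' ↦
    exists_forall_ge_measure_lt_le_of_exp_tail hε₀ hκ hb0 htail hδ hε'⟩
end
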